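/- arXiv:2208.03860 — 5 statements merged into one kernel-verified Lean document; each statement's English description precedes it below -/
import Mathlib

section
/- The Slater spectrum is symmetric: for every t with 0 ≤ t ≤ T, the number of permutations ρ with S(ρ) = t equals the number of permutations ρ with S(ρ) = T - t, i.e. a_t = a_{T-t}. -/
/-- The inconsistency index `S(ρ) = ∑_{i<j} w (ρ j) (ρ i)`. -/
def inconsistency {M : ℕ} (w : Fin M → Fin M → ℕ) (ρ : Equiv.Perm (Fin M)) : ℕ :=
  ∑ i : Fin M, ∑ j ∈ Finset.Ioi i, w (ρ j) (ρ i)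

/-- The total number of comparisons `T = ∑_{m,n} w m n`. -/
def totalComparisons {M : ℕ} (w : Fin M → Fin M → ℕ) : ℕ :=
  ∑ m : Fin M, ∑ n : Fin M, w m n

/-- The Slater spectrum `a_t = card {ρ : S(ρ) = t}`. -/
def slaterSpectrum {M : ℕ} (w : Fin M → Fin M → ℕ) (t : ℕ) : ℕ :=
  (Finset.univ.filter fun ρ : Equiv.Perm (Fin M) => inconsistency w ρ = t).card

/-!
Reversing an order `ρ` (i.e. passing to `ρ ∘ rev`) turns each pair counted by `S` into one that
is not counted and vice versa, so `S(ρ) + S(ρ ∘ rev) = T` because the diagonal of `w` vanishes.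
Hence `ρ ↦ ρ ∘ rev` maps `{S = t}` bijectively onto `{S = T - t}`.
-/

open Finset

theorem Finset.card_filter_eq_eq_card_filter_eq_tsub {α : Type*} [Fintype α] (e : α ≃ α)
    (f : α → ℕ) {T t : ℕ} (hf : ∀ a, f a + f (e a) = T) (ht : t ≤ T) :
    #{a | f a = t} = #{a | f a = T - t} :=
  card_equiv e fun a => by
    have := hf a
    simp only [mem_filter, mem_univ, true_and]
    omega

theorem Finset.sum_Ioi_add_sum_Iio {α M : Type*} [LinearOrder α] [Fintype α]
    [LocallyFiniteOrderTop α] [LocallyFiniteOrderBot α] [AddCommMonoid M] (f : α → M) {a : α}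
    (ha : f a = 0) :
    ∑ b ∈ Ioi a, f b + ∑ b ∈ Iio a, f b = ∑ b, f b := by
  rw [← sum_disjUnion (disjoint_Ioi_Iio a), Ioi_disjUnion_Iio, ← sum_compl_add_sum {a},
    sum_singleton, ha, add_zero]

theorem Equiv.sum_sum_comp {α M : Type*} [Fintype α] [AddCommMonoid M] (e : α ≃ α)
    (w : α → α → M) : ∑ i, ∑ j, w (e j) (e i) = ∑ m, ∑ n, w m n := by
  rw [sum_comm, e.sum_comp fun m => ∑ i, w m (e i)]
  exact sum_congr rfl fun m _ => e.sum_comp (w m)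

theorem inconsistency_mul_revPerm {M : ℕ} (w : Fin M → Fin M → ℕ) (ρ : Equiv.Perm (Fin M)) :
    inconsistency w (ρ * Fin.revPerm) = ∑ i, ∑ j ∈ Iio i, w (ρ j) (ρ i) := by
  refine Fintype.sum_equiv Fin.revPerm _ _ fun i => ?_
  rw [Fin.revPerm_apply, ← Fin.map_revPerm_Ioi, sum_map]
  rfl

theorem inconsistency_add_inconsistency_mul_revPerm {M : ℕ} (w : Fin M → Fin M → ℕ)
    (hw : ∀ m, w m m = 0) (ρ : Equiv.Perm (Fin M)) :
    inconsistency w ρ + inconsistency w (ρ * Fin.revPerm) = totalComparisons w := by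
  rw [inconsistency_mul_revPerm, inconsistency, ← sum_add_distrib, totalComparisons,
    ← ρ.sum_sum_comp w]
  exact sum_congr rfl fun i _ => sum_Ioi_add_sum_Iio (fun j => w (ρ j) (ρ i)) (hw (ρ i))

/-- The Slater spectrum is symmetric: for every `t ≤ T`, `a_t = a_{T-t}`. -/
theorem slaterSpectrum_symm
    (M : ℕ) (w : Fin M → Fin M → ℕ) (hw : ∀ m, w m m = 0)
    (t : ℕ) (ht : t ≤ totalComparisons w) :
    slaterSpectrum w t = slaterSpectrum w (totalComparisons w - t) :=
  card_filter_eq_eq_card_filter_eq_tsub (Equiv.mulRight Fin.revPerm) (inconsistency w)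
    (inconsistency_add_inconsistency_mul_revPerm w hw) ht
end

section
/- For every real number p and every permutation ρ of Fin M, the likelihood of the observation matrix factors through the inconsistency index: ∏_{i<j} p^{w(ρ i, ρ j)} · (1-p)^{w(ρ j, ρ i)} = p^{T - S(ρ)} · (1-p)^{S(ρ)}, where the product runs over all pairs of positions i < j in Fin M. -/
/-!
Each comparison between two distinct objects either agrees with the order `ρ` (the earlier object
wins) or is counted by the inconsistency index, so the `T` comparisons split as `(T - S) + S`.
The likelihood is a product of powers of `p` and `1 - p`, whose exponents add up to exactly
these two counts.
-/

open Finset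

def consistency {M : ℕ} (w : Fin M → Fin M → ℕ) (ρ : Equiv.Perm (Fin M)) : ℕ :=
  ∑ i : Fin M, ∑ j ∈ Ioi i, w (ρ i) (ρ j)

theorem Finset.sum_sum_Ioi_add_sum_sum_Ioi_swap {α β : Type*} [LinearOrder α] [Fintype α]
    [LocallyFiniteOrderTop α] [LocallyFiniteOrderBot α] [AddCommMonoid β] {f : α → α → β}
    (hf : ∀ i, f i i = 0) :
    ∑ i, ∑ j ∈ Ioi i, f i j + ∑ i, ∑ j ∈ Ioi i, f j i = ∑ i, ∑ j, f i j := by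
  rw [← sum_add_distrib]
  simp_rw [← sum_add_distrib]
  rw [sum_sum_Ioi_add_eq_sum_sum_off_diag]
  exact sum_congr rfl fun i _ => by rw [compl_singleton, sum_erase _ (hf i)]

theorem totalComparisons_eq_sum_perm {M : ℕ} (w : Fin M → Fin M → ℕ) (ρ : Equiv.Perm (Fin M)) :
    totalComparisons w = ∑ i, ∑ j, w (ρ i) (ρ j) := by
  rw [totalComparisons, ← Equiv.sum_comp ρ]
  simp only [Equiv.sum_comp ρ (w _)]

theorem consistency_add_inconsistency {M : ℕ} {w : Fin M → Fin M → ℕ} (hw : ∀ m, w m m = 0)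
    (ρ : Equiv.Perm (Fin M)) :
    consistency w ρ + inconsistency w ρ = totalComparisons w := by
  rw [totalComparisons_eq_sum_perm w ρ]
  exact sum_sum_Ioi_add_sum_sum_Ioi_swap fun i => hw (ρ i)

theorem totalComparisons_sub_inconsistency {M : ℕ} {w : Fin M → Fin M → ℕ}
    (hw : ∀ m, w m m = 0) (ρ : Equiv.Perm (Fin M)) :
    totalComparisons w - inconsistency w ρ = consistency w ρ := by
  rw [← consistency_add_inconsistency hw ρ, Nat.add_sub_cancel]

/-- The likelihood of the observation matrix factors through the inconsistency index:
`∏_{i<j} p^{w(ρ i, ρ j)} (1-p)^{w(ρ j, ρ i)} = p^{T - S(ρ)} (1-p)^{S(ρ)}`. -/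
theorem likelihood_factors_through_inconsistency
    (M : ℕ) (w : Fin M → Fin M → ℕ) (hw : ∀ m, w m m = 0)
    (p : ℝ) (ρ : Equiv.Perm (Fin M)) :
    (∏ i : Fin M, ∏ j ∈ Finset.Ioi i,
        p ^ (w (ρ i) (ρ j)) * (1 - p) ^ (w (ρ j) (ρ i))) =
      p ^ (totalComparisons w - inconsistency w ρ) * (1 - p) ^ (inconsistency w ρ) := by
  rw [totalComparisons_sub_inconsistency hw ρ, consistency, inconsistency]
  simp_rw [prod_mul_distrib, prod_pow_eq_pow_sum]
end

section
/- Normalization of the posterior: let T be a natural number and a_0, …, a_T real numbers satisfying the symmetry a_t = a_{T-t} for all t ≤ T, and let φ(p) = ∑_{t=0}^{T} a_t p^{T-t} (1-p)^{t}. Then ∫_{1/2}^{1} φ(p) dp = (1 / (2(T+1))) · ∑_{t=0}^{T} a_t / binom(T, t). -/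
/-!
The substitution `p ↦ 1 - p` maps the `t`-th term of `φ` to the `(T - t)`-th one, so the symmetry
of `a` makes `φ` symmetric about `1/2`, and the integral over `[1/2, 1]` is half the integral over
`[0, 1]`. The latter is a sum of Beta integrals
`∫₀¹ p^(T-t) (1-p)^t dp = (T-t)! t! / (T+1)! = 1 / ((T+1) binom(T,t))`.
-/

open intervalIntegral Finset Nat

lemma integral_pow_mul_one_sub_pow_succ (m n : ℕ) :
    (m + 1 : ℝ) * ∫ x in (0:ℝ)..1, x ^ m * (1 - x) ^ (n + 1) =
      (n + 1) * ∫ x in (0:ℝ)..1, x ^ (m + 1) * (1 - x) ^ n := by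
  -- `x ^ (m + 1) * (1 - x) ^ (n + 1)` vanishes at 0 and 1, so its derivative integrates to 0.
  have hderiv (x : ℝ) : HasDerivAt (fun x : ℝ => x ^ (m + 1) * (1 - x) ^ (n + 1))
      ((m + 1 : ℝ) * (x ^ m * (1 - x) ^ (n + 1)) - (n + 1 : ℝ) * (x ^ (m + 1) * (1 - x) ^ n))
      x := by
    have h := ((hasDerivAt_id' x).fun_pow (m + 1)).fun_mul
      (((hasDerivAt_id' x).const_sub 1).fun_pow (n + 1))
    refine h.congr_deriv ?_
    push_cast [add_tsub_cancel_right]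
    ring
  have hftc := integral_eq_sub_of_hasDerivAt (fun x _ => hderiv x)
    (Continuous.intervalIntegrable (by fun_prop) 0 1)
  rw [integral_sub (Continuous.intervalIntegrable (by fun_prop) 0 1)
      (Continuous.intervalIntegrable (by fun_prop) 0 1),
    integral_const_mul, integral_const_mul] at hftc
  norm_num at hftc
  linarith

theorem integral_pow_mul_one_sub_pow (m n : ℕ) :
    ∫ x in (0:ℝ)..1, x ^ m * (1 - x) ^ n = (m ! * n ! : ℝ) / (m + n + 1)! := by
  induction n generalizing m with
  | zero => simp [integral_pow, Nat.factorial_succ]; field_simp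
  | succ n ih =>
    have h := integral_pow_mul_one_sub_pow_succ m n
    rw [ih (m + 1), show m + 1 + n + 1 = m + (n + 1) + 1 by ring] at h
    rw [Nat.factorial_succ m] at h
    rw [Nat.factorial_succ n]
    push_cast at h ⊢
    field_simp at h ⊢
    linarith

lemma integral_pow_sub_mul_one_sub_pow {T t : ℕ} (ht : t ≤ T) :
    ∫ x in (0:ℝ)..1, x ^ (T - t) * (1 - x) ^ t = 1 / ((T + 1) * T.choose t) := by
  have hchoose : (T.choose t * t ! * (T - t)! : ℝ) = T ! := by
    exact_mod_cast Nat.choose_mul_factorial_mul_factorial ht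
  have hchoose_pos : (0 : ℝ) < T.choose t := by exact_mod_cast Nat.choose_pos ht
  rw [integral_pow_mul_one_sub_pow, Nat.sub_add_cancel ht, Nat.factorial_succ]
  push_cast
  rw [← hchoose]
  field_simp

lemma integral_half_one_eq_half_mul_integral_zero_one {f : ℝ → ℝ}
    (hf : IntervalIntegrable f MeasureTheory.volume 0 1)
    (hsymm : ∀ x, f (1 - x) = f x) :
    ∫ x in (1/2:ℝ)..1, f x = (1/2) * ∫ x in (0:ℝ)..1, f x := by
  have hreflect : ∫ x in (0:ℝ)..1/2, f x = ∫ x in (1/2:ℝ)..1, f x := by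
    have h := integral_comp_sub_left f (1 : ℝ) (a := 0) (b := 1/2)
    norm_num [hsymm] at h
    exact h
  have hsplit := integral_add_adjacent_intervals
    (hf.mono_set (Set.uIcc_subset_uIcc_left (b := 1) (by norm_num [Set.uIcc_of_le])))
    (hf.mono_set (Set.uIcc_subset_uIcc_right (a := 0) (x := (1/2:ℝ))
      (by norm_num [Set.uIcc_of_le])))
  rw [← hsplit, hreflect]
  ring

lemma sum_mul_pow_mul_one_sub_pow_comp_one_sub {R : Type*} [CommRing R] {T : ℕ} {a : ℕ → R}
    (hsym : ∀ t ≤ T, a t = a (T - t)) (p : R) :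
    ∑ t ∈ range (T + 1), a t * ((1 - p) ^ (T - t) * (1 - (1 - p)) ^ t) =
      ∑ t ∈ range (T + 1), a t * (p ^ (T - t) * (1 - p) ^ t) := by
  rw [← sum_range_reflect]
  refine sum_congr rfl fun t ht => ?_
  have htT : t ≤ T := mem_range_succ_iff.mp ht
  rw [sub_sub_cancel, add_tsub_cancel_right, Nat.sub_sub_self htT, ← hsym t htT]
  ring

/-- Normalization of the posterior: if `a_t = a_{T-t}` for all `t ≤ T` and
`φ(p) = ∑_{t=0}^{T} a_t p^{T-t} (1-p)^t`, then
`∫_{1/2}^1 φ(p) dp = (1 / (2(T+1))) ∑_{t=0}^{T} a_t / binom(T,t)`. -/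
theorem posterior_normalization
    (T : ℕ) (a : ℕ → ℝ) (hsym : ∀ t ≤ T, a t = a (T - t)) :
    (∫ p in (1/2 : ℝ)..1,
        ∑ t ∈ Finset.range (T + 1), a t * (p ^ (T - t) * (1 - p) ^ t)) =
      (1 / (2 * (T + 1 : ℝ))) *
        ∑ t ∈ Finset.range (T + 1), a t / (T.choose t : ℝ) := by
  have hcont : Continuous fun p : ℝ => ∑ t ∈ range (T + 1), a t * (p ^ (T - t) * (1 - p) ^ t) := by
    fun_prop
  rw [integral_half_one_eq_half_mul_integral_zero_one (hcont.intervalIntegrable 0 1)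
      (sum_mul_pow_mul_one_sub_pow_comp_one_sub hsym),
    integral_finsetSum fun t _ => Continuous.intervalIntegrable (by fun_prop) 0 1, mul_sum, mul_sum]
  refine sum_congr rfl fun t ht => ?_
  rw [integral_const_mul, integral_pow_sub_mul_one_sub_pow (mem_range_succ_iff.mp ht)]
  field_simp
end

section
/- Sign of the curvature of the degenerate posterior at 1/2: let T ≥ 2 and s be natural numbers with s ≤ T, let a > 0 be a real number, and define φ̃(p) = a·(p^{T-s}(1-p)^{s} + p^{s}(1-p)^{T-s}). Then the second derivative of φ̃ at p = 1/2 is positive if and only if (s - T/2)² > T/4, and negative if and only if (s - T/2)² < T/4. -/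
/-!
For `f(p) = p^m (1-p)^n`, Leibniz' rule gives
`p²(1-p)² f''(p) = f(p) (m(m-1)(1-p)² - 2mn p(1-p) + n(n-1)p²)`, so
`f''(1/2) = 4 · 2^{-(m+n)} ((m-n)² - (m+n))`, which is symmetric in `m` and `n`.
With `m + n = T` and `m - n = T - 2s` both summands of `φ̃` contribute the same, and
`(T-2s)² - T = 4((s-T/2)² - T/4)`, so `φ̃''(1/2)` is a positive multiple of `(s-T/2)² - T/4`.
-/

section

variable {𝕜 : Type*} [NontriviallyNormedField 𝕜]

/-- The truncated exponent `m - k` is harmless: the falling factorial vanishes when `m < k`. -/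
theorem descFactorial_mul_pow_sub_mul_pow (m k : ℕ) (x : 𝕜) :
    (m.descFactorial k : 𝕜) * x ^ (m - k) * x ^ k = m.descFactorial k * x ^ m := by
  rcases le_or_gt k m with hkm | hmk
  · rw [mul_assoc, ← pow_add, Nat.sub_add_cancel hkm]
  · simp [Nat.descFactorial_eq_zero_iff_lt.mpr hmk]

theorem iteratedDeriv_one_sub_pow (n k : ℕ) (x : 𝕜) :
    iteratedDeriv k (fun p : 𝕜 => (1 - p) ^ n) x
      = (-1) ^ k * n.descFactorial k * (1 - x) ^ (n - k) := by
  rw [iteratedDeriv_comp_const_sub k (· ^ n)]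
  simp only [iteratedDeriv_pow, smul_eq_mul, mul_assoc]

theorem sq_mul_sq_mul_iteratedDeriv_two_pow_mul_one_sub_pow (m n : ℕ) (x : 𝕜) :
    x ^ 2 * (1 - x) ^ 2 * iteratedDeriv 2 (fun p : 𝕜 => p ^ m * (1 - p) ^ n) x
      = x ^ m * (1 - x) ^ n * (m * (m - 1) * (1 - x) ^ 2 - 2 * m * n * x * (1 - x)
          + n * (n - 1) * x ^ 2) := by
  rw [iteratedDeriv_fun_mul (by fun_prop) (by fun_prop)]
  have hm := descFactorial_mul_pow_sub_mul_pow m 1 x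
  have hm2 := descFactorial_mul_pow_sub_mul_pow m 2 x
  have hn := descFactorial_mul_pow_sub_mul_pow n 1 (1 - x)
  have hn2 := descFactorial_mul_pow_sub_mul_pow n 2 (1 - x)
  simp only [Finset.sum_range_succ, Finset.sum_range_zero, Nat.reduceSub, iteratedDeriv_pow,
    iteratedDeriv_one_sub_pow, Nat.cast_descFactorial_two, Nat.descFactorial_one,
    Nat.descFactorial_zero, Nat.choose_zero_right, Nat.choose_one_right, Nat.choose_self,
    Nat.sub_zero] at *
  linear_combination x ^ 2 * x ^ m * hn2 + (1 - x) ^ 2 * (1 - x) ^ n * hm2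
    - 2 * x * (1 - x) * (n * (1 - x) ^ (n - 1) * (1 - x) ^ 1 * hm + m * x ^ m * hn)

theorem iteratedDeriv_two_pow_mul_one_sub_pow_half [CharZero 𝕜] (m n : ℕ) :
    iteratedDeriv 2 (fun p : 𝕜 => p ^ m * (1 - p) ^ n) (1 / 2)
      = 4 * (1 / 2) ^ (m + n) * (((m : 𝕜) - n) ^ 2 - (m + n)) := by
  have h := sq_mul_sq_mul_iteratedDeriv_two_pow_mul_one_sub_pow m n (1 / 2 : 𝕜)
  rw [show (1 : 𝕜) - 1 / 2 = 1 / 2 by norm_num, pow_add] at *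
  linear_combination 16 * h

end

theorem degenerate_posterior_curvature_sign_general
    (T s : ℕ) (hs : s ≤ T) (a : ℝ) (ha : 0 < a) :
    (0 < iteratedDeriv 2
        (fun p : ℝ => a * (p ^ (T - s) * (1 - p) ^ s + p ^ s * (1 - p) ^ (T - s))) (1/2)
      ↔ (T : ℝ) / 4 < ((s : ℝ) - (T : ℝ) / 2) ^ 2) ∧
    (iteratedDeriv 2
        (fun p : ℝ => a * (p ^ (T - s) * (1 - p) ^ s + p ^ s * (1 - p) ^ (T - s))) (1/2) < 0
      ↔ ((s : ℝ) - (T : ℝ) / 2) ^ 2 < (T : ℝ) / 4) := by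
  have hcurv : iteratedDeriv 2
      (fun p : ℝ => a * (p ^ (T - s) * (1 - p) ^ s + p ^ s * (1 - p) ^ (T - s))) (1 / 2)
      = 32 * a * (1 / 2) ^ T * (((s : ℝ) - T / 2) ^ 2 - T / 4) := by
    rw [iteratedDeriv_const_mul_field, iteratedDeriv_fun_add (by fun_prop) (by fun_prop),
      iteratedDeriv_two_pow_mul_one_sub_pow_half, iteratedDeriv_two_pow_mul_one_sub_pow_half,
      Nat.add_comm s, Nat.sub_add_cancel hs, Nat.cast_sub hs]
    ring
  have hpos : 0 < 32 * a * (1 / 2 : ℝ) ^ T := by positivity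
  rw [hcurv]
  exact ⟨(mul_pos_iff_of_pos_left hpos).trans sub_pos,
    (smul_neg_iff_of_pos_left hpos).trans sub_neg⟩

/-- Sign of the curvature of the degenerate posterior at `1/2`: for `T ≥ 2`, `s ≤ T` and
`a > 0`, with `φ̃(p) = a (p^{T-s}(1-p)^s + p^s(1-p)^{T-s})`, the second derivative of `φ̃`
at `p = 1/2` is positive iff `(s - T/2)² > T/4`, and negative iff `(s - T/2)² < T/4`. -/
theorem degenerate_posterior_curvature_sign
    (T s : ℕ) (hT : 2 ≤ T) (hs : s ≤ T) (a : ℝ) (ha : 0 < a) :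
    (0 < iteratedDeriv 2
        (fun p : ℝ => a * (p ^ (T - s) * (1 - p) ^ s + p ^ s * (1 - p) ^ (T - s))) (1/2)
      ↔ (T : ℝ) / 4 < ((s : ℝ) - (T : ℝ) / 2) ^ 2) ∧
    (iteratedDeriv 2
        (fun p : ℝ => a * (p ^ (T - s) * (1 - p) ^ s + p ^ s * (1 - p) ^ (T - s))) (1/2) < 0
      ↔ ((s : ℝ) - (T : ℝ) / 2) ^ 2 < (T : ℝ) / 4) :=
  degenerate_posterior_curvature_sign_general T s hs a ha
end

section
/- Recursion for the Slater spectrum (correctness of Algorithm 1): let s be a nonempty finite subset of Fin M and let Ord(s) denote the set of duplicate-free lists of elements of Fin M whose set of elements equals s. Then for every real number u, ∑_{l ∈ Ord(s)} u^{C(l)} = ∑_{e ∈ s} u^{d_e(s)} · ( ∑_{l' ∈ Ord(s \ {e})} u^{C(l')} ), where d_e(s) = ∑_{n ∈ s \ {e}} w e n. -/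
/-- The consistency index of a list `l = [l_0, …, l_{k-1}]`:
`C(l) = ∑_{0 ≤ i < j < k} w (l_i) (l_j)`. -/
def listConsistency {M : ℕ} (w : Fin M → Fin M → ℕ) (l : List (Fin M)) : ℕ :=
  ∑ i : Fin l.length, ∑ j : Fin l.length,
    if (i : ℕ) < (j : ℕ) then w (l.get i) (l.get j) else 0

/-- `OrdSet s`: the set of duplicate-free lists of elements of `Fin M` whose set of elements
equals the finset `s`. -/
def OrdSet {M : ℕ} (s : Finset (Fin M)) : Set (List (Fin M)) :=
  {l : List (Fin M) | l.Nodup ∧ l.toFinset = s}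

/-!
A duplicate-free list with underlying set `s` is the same as a first element `e ∈ s` followed by
such a list for `s \ {e}`. Under this decomposition the consistency index splits as
`C(e :: l) = d_e(s) + C(l)`, since the first element precedes every element of `l`; so the sum
over orderings of `s` splits accordingly.
-/

namespace Finset

variable {α : Type*} [DecidableEq α]

noncomputable def orderings (s : Finset α) : Finset (List α) :=
  s.toList.permutations.toFinset

theorem mem_orderings {s : Finset α} {l : List α} :
    l ∈ s.orderings ↔ l.Nodup ∧ l.toFinset = s := by
  simp only [orderings, List.mem_toFinset, List.mem_permutations]
  constructor
  · intro h
    refine ⟨h.nodup_iff.mpr s.nodup_toList, ?_⟩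
    ext x
    simp [h.mem_iff]
  · rintro ⟨hnd, rfl⟩
    exact List.perm_of_nodup_nodup_toFinset_eq hnd (nodup_toList _) (by simp)

theorem cons_mem_orderings_iff {s : Finset α} {e : α} {l : List α} :
    e :: l ∈ s.orderings ↔ e ∈ s ∧ l ∈ (s.erase e).orderings := by
  simp only [mem_orderings, List.nodup_cons, List.toFinset_cons]
  constructor
  · rintro ⟨⟨he, hnd⟩, rfl⟩
    exact ⟨mem_insert_self e _, hnd, by rw [erase_insert (by simpa using he)]⟩
  · rintro ⟨he, hnd, hl⟩
    refine ⟨⟨fun hel => ?_, hnd⟩, by rw [hl, insert_erase he]⟩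
    have he' : e ∈ s.erase e := hl ▸ List.mem_toFinset.mpr hel
    simp at he'

theorem sum_orderings_eq_sum_sum_cons {β : Type*} [AddCommMonoid β] {s : Finset α}
    (hs : s.Nonempty) (f : List α → β) :
    ∑ l ∈ s.orderings, f l = ∑ e ∈ s, ∑ l ∈ (s.erase e).orderings, f (e :: l) := by
  rw [sum_sigma']
  symm
  refine sum_bij (fun p _ => p.1 :: p.2) ?_ ?_ ?_ (fun _ _ => rfl)
  · rintro ⟨e, l⟩ hp
    exact cons_mem_orderings_iff.mpr (mem_sigma.mp hp)
  · rintro ⟨e, l⟩ - ⟨e', l'⟩ - h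
    obtain ⟨rfl, rfl⟩ := List.cons_eq_cons.mp h
    rfl
  · rintro (_ | ⟨e, l⟩) hl
    · exact absurd (mem_orderings.mp hl).2.symm hs.ne_empty
    · exact ⟨⟨e, l⟩, mem_sigma.mpr (cons_mem_orderings_iff.mp hl), rfl⟩

end Finset

theorem coe_orderings {M : ℕ} (s : Finset (Fin M)) :
    (s.orderings : Set (List (Fin M))) = OrdSet s :=
  Set.ext fun _ => Finset.mem_orderings

theorem Fin.sum_univ_get_eq_sum_toFinset {α β : Type*} [DecidableEq α] [AddCommMonoid β]
    (f : α → β) {l : List α} (hl : l.Nodup) :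
    ∑ i : Fin l.length, f (l.get i) = ∑ a ∈ l.toFinset, f a := by
  rw [List.sum_toFinset _ hl, ← Fin.sum_univ_fun_getElem]
  rfl

theorem listConsistency_cons {M : ℕ} (w : Fin M → Fin M → ℕ) (e : Fin M) (l : List (Fin M)) :
    listConsistency w (e :: l) =
      ∑ i : Fin l.length, w e (l.get i) + listConsistency w l := by
  change (∑ i : Fin (l.length + 1), ∑ j : Fin (l.length + 1),
      if (i : ℕ) < j then w ((e :: l).get i) ((e :: l).get j) else 0) = _
  rw [Fin.sum_univ_succ]
  congr 1
  · simp [Fin.sum_univ_succ]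
  · refine Finset.sum_congr rfl fun i _ => ?_
    simp [Fin.sum_univ_succ]

theorem listConsistency_cons_of_nodup {M : ℕ} (w : Fin M → Fin M → ℕ) (e : Fin M)
    {l : List (Fin M)} (hl : l.Nodup) :
    listConsistency w (e :: l) = ∑ n ∈ l.toFinset, w e n + listConsistency w l := by
  rw [listConsistency_cons, Fin.sum_univ_get_eq_sum_toFinset _ hl]

theorem slaterSpectrum_recursion_general
    (M : ℕ) (w : Fin M → Fin M → ℕ)
    (s : Finset (Fin M)) (hs : s.Nonempty) (u : ℝ) :
    (∑ᶠ l ∈ OrdSet s, u ^ listConsistency w l) =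
      ∑ e ∈ s, u ^ (∑ n ∈ s.erase e, w e n) *
        ∑ᶠ l ∈ OrdSet (s.erase e), u ^ listConsistency w l := by
  simp only [← coe_orderings, finsum_mem_coe_finset, Finset.mul_sum]
  rw [Finset.sum_orderings_eq_sum_sum_cons hs]
  refine Finset.sum_congr rfl fun e _ => Finset.sum_congr rfl fun l hl => ?_
  obtain ⟨hnd, hl⟩ := Finset.mem_orderings.mp hl
  rw [listConsistency_cons_of_nodup w e hnd, hl, pow_add]

/-- Recursion for the Slater spectrum (correctness of Algorithm 1): for a nonempty finset
`s` and every real `u`,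
`∑_{l ∈ OrdSet s} u^{C(l)} = ∑_{e ∈ s} u^{d_e(s)} ∑_{l' ∈ OrdSet (s \ {e})} u^{C(l')}`,
where `d_e(s) = ∑_{n ∈ s \ {e}} w e n`. -/
theorem slaterSpectrum_recursion
    (M : ℕ) (w : Fin M → Fin M → ℕ) (hw : ∀ m, w m m = 0)
    (s : Finset (Fin M)) (hs : s.Nonempty) (u : ℝ) :
    (∑ᶠ l ∈ OrdSet s, u ^ listConsistency w l) =
      ∑ e ∈ s, u ^ (∑ n ∈ s.erase e, w e n) *
        ∑ᶠ l ∈ OrdSet (s.erase e), u ^ listConsistency w l :=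
  slaterSpectrum_recursion_general M w s hs u
end
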